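/- arXiv:1905.09684 — 7 statements merged into one kernel-verified Lean document; each statement's English description precedes it below -/
import Mathlib

section
/- Let (X, μ) be a measure space and let p_1, ..., p_N be probability densities on (X, μ). Let p_g be a probability density on (X, μ). Set Z = ∫ max_{1 ≤ i ≤ N} p_i(x) dμ(x), assume 0 < Z < ∞, set α = 1/Z and p_max(x) = (1/Z) · max_{1 ≤ i ≤ N} p_i(x). Then for every x ∈ X, max_{1 ≤ i ≤ N} ( p_i(x) / (p_i(x) + p_g(x)) ) = p_max(x) / ( p_max(x) + α · p_g(x) ). (Here division of 0 by 0 is interpreted as 0.) -/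
open MeasureTheory

lemma div_add_mono {a b c : ℝ} (hab : a ≤ b) (ha : 0 ≤ a) (hc : 0 ≤ c) :
    a / (a + c) ≤ b / (b + c) := by
  rcases eq_or_lt_of_le (by linarith : (0:ℝ) ≤ a + c) with h | h
  · rcases eq_or_lt_of_le (by linarith : (0:ℝ) ≤ b + c) with h' | h'
    · rw [← h, ← h']; simp
    · have ha0 : a = 0 := by nlinarith
      have hb : 0 ≤ b := ha0 ▸ hab
      have hc' : 0 ≤ b + c := by linarith
      simp [ha0]
      positivity
  · have h' : 0 < b + c := by linarith
    rw [div_le_div_iff₀ h h']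
    nlinarith

/-- Lemma 1: if each optimal discriminator is `Dᵢ*(x) = pᵢ(x)/(pᵢ(x)+p_g(x))`, then their
pointwise maximum equals the optimal discriminator for the normalized max-distribution
`p_max = (1/Z) ⬝ maxᵢ pᵢ` against the generator distribution rescaled by `α = 1/Z`. -/
theorem max_optimal_discriminator
    {X : Type*} [MeasurableSpace X] (μ : Measure X)
    (N : ℕ) (hN : 1 ≤ N)
    (p : Fin N → X → ℝ)
    (hp_meas : ∀ i, Measurable (p i)) (hp_nonneg : ∀ i x, 0 ≤ p i x)
    (hp_int : ∀ i, ∫ x, p i x ∂μ = 1)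
    (pg : X → ℝ)
    (hpg_meas : Measurable pg) (hpg_nonneg : ∀ x, 0 ≤ pg x)
    (hpg_int : ∫ x, pg x ∂μ = 1)
    (Z : ℝ)
    (hZ : Z = ∫ x, (Finset.univ.sup' (Finset.univ_nonempty_iff.mpr ⟨⟨0, hN⟩⟩)
        fun i => p i x) ∂μ)
    (hZpos : 0 < Z)
    (α : ℝ) (hα : α = 1 / Z)
    (pmax : X → ℝ)
    (hpmax : ∀ x, pmax x = (1 / Z) *
        Finset.univ.sup' (Finset.univ_nonempty_iff.mpr ⟨⟨0, hN⟩⟩) (fun i => p i x)) :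
    ∀ x, (Finset.univ.sup' (Finset.univ_nonempty_iff.mpr ⟨⟨0, hN⟩⟩)
        fun i => p i x / (p i x + pg x)) =
      pmax x / (pmax x + α * pg x) := by
  intro x
  have hne : (Finset.univ : Finset (Fin N)).Nonempty :=
    Finset.univ_nonempty_iff.mpr ⟨⟨0, hN⟩⟩
  set M : ℝ := Finset.univ.sup' hne (fun i => p i x) with hM
  have hMnonneg : 0 ≤ M := by
    obtain ⟨i₀, _, hi₀⟩ := Finset.exists_mem_eq_sup' hne (fun i => p i x)
    rw [hM, hi₀]; exact hp_nonneg i₀ x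
  have hZne : (1 : ℝ) / Z ≠ 0 := by positivity
  have hRHS : pmax x / (pmax x + α * pg x) = M / (M + pg x) := by
    rw [hpmax x, hα, ← hM, ← mul_add, mul_div_mul_left _ _ hZne]
  rw [hRHS]
  apply le_antisymm
  · apply Finset.sup'_le
    intro i _
    exact div_add_mono (Finset.le_sup' (fun i => p i x) (Finset.mem_univ i))
      (hp_nonneg i x) (hpg_nonneg x)
  · obtain ⟨i₀, _, hi₀⟩ := Finset.exists_mem_eq_sup' hne (fun i => p i x)
    rw [hM, hi₀]
    exact Finset.le_sup' (fun i => p i x / (p i x + pg x)) (Finset.mem_univ i₀)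
end

section
/- Let (X, μ) be a measure space, let α be a real number with 0 < α ≤ 1, and let p and q be probability densities on (X, μ). Then ∫ ( (q(x) + p(x)) · α² · p(x)² ) / ( q(x) + α·p(x) )² dμ(x) ≥ 2α² / (1+α)², and equality holds if and only if p = q μ-almost everywhere. (At points where q(x) + α·p(x) = 0 the integrand is interpreted as 0.) -/
open MeasureTheory

lemma lsgan_ptwise (α : ℝ) (hα0 : 0 < α) (hα1 : α ≤ 1) (u v : ℝ) (hu : 0 ≤ u) (hv : 0 ≤ v) :
    α^2*(5+α)/(1+α)^3 * u + α^2*(α-3)/(1+α)^3 * v ≤ (v+u)*α^2*u^2/(v+α*u)^2 ∧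
    ((v+u)*α^2*u^2/(v+α*u)^2 = α^2*(5+α)/(1+α)^3 * u + α^2*(α-3)/(1+α)^3 * v → u = v) := by
  have h1α : (0:ℝ) < 1 + α := by linarith
  have h1α3 : (0:ℝ) < (1+α)^3 := by positivity
  have expand : α^2*(5+α)/(1+α)^3 * u + α^2*(α-3)/(1+α)^3 * v
      = (α^2*(5+α) * u + α^2*(α-3) * v) / (1+α)^3 := by ring
  rcases eq_or_lt_of_le (by positivity : (0:ℝ) ≤ v + α*u) with h0 | h0
  · have hv0 : v = 0 := by nlinarith
    have hu0 : u = 0 := by nlinarith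
    simp [hu0, hv0]
  · have hD : (0:ℝ) < (v+α*u)^2 := by positivity
    have hkey : ((v+u)*α^2*u^2) * (1+α)^3 - (α^2*(5+α) * u + α^2*(α-3) * v) * (v+α*u)^2
        = α^2 * ((u-v)^2*((1+3*α-2*α^2)*u+(3-α)*v)) := by ring
    have hcoef1 : (0:ℝ) < 1+3*α-2*α^2 := by nlinarith
    have hcoef2 : (0:ℝ) < 3-α := by linarith
    have hRnn : 0 ≤ α^2 * ((u-v)^2*((1+3*α-2*α^2)*u+(3-α)*v)) := by positivity
    constructor
    · rw [le_div_iff₀ hD, expand, div_mul_eq_mul_div, div_le_iff₀ h1α3]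
      nlinarith [hRnn, hkey]
    · intro heq
      rw [expand, div_eq_div_iff (ne_of_gt hD) (ne_of_gt h1α3)] at heq
      have hz : α^2 * ((u-v)^2*((1+3*α-2*α^2)*u+(3-α)*v)) = 0 := by linarith [hkey, heq]
      by_contra hne
      have huv : 0 < (u-v)^2 := by
        have : u - v ≠ 0 := sub_ne_zero.mpr hne
        positivity
      have hsum : 0 < u + v := by
        rcases lt_or_eq_of_le hu with h | h
        · linarith
        · rcases lt_or_eq_of_le hv with h' | h'
          · linarith
          · exact absurd (by rw [← h, ← h']) hne
      have hL : 0 < (1+3*α-2*α^2)*u+(3-α)*v := by nlinarith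
      linarith [mul_pos (mul_pos (pow_pos hα0 2) huv) hL, hz]

/-- Theorem 2 in analytic form: the least-squares generator objective given the optimal
maximal discriminator is at least `2α²/(1+α)²`, with equality iff `p = q` a.e. -/
theorem lsgan_objective_min
    {X : Type*} [MeasurableSpace X] (μ : Measure X)
    (α : ℝ) (hα0 : 0 < α) (hα1 : α ≤ 1)
    (p q : X → ℝ)
    (hp_meas : Measurable p) (hp_nonneg : ∀ x, 0 ≤ p x) (hp_int : ∫ x, p x ∂μ = 1)
    (hq_meas : Measurable q) (hq_nonneg : ∀ x, 0 ≤ q x) (hq_int : ∫ x, q x ∂μ = 1) :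
    (2 * α ^ 2 / (1 + α) ^ 2 ≤
      ∫ x, ((q x + p x) * α ^ 2 * (p x) ^ 2) / (q x + α * p x) ^ 2 ∂μ) ∧
    ((∫ x, ((q x + p x) * α ^ 2 * (p x) ^ 2) / (q x + α * p x) ^ 2 ∂μ)
        = 2 * α ^ 2 / (1 + α) ^ 2 ↔ p =ᵐ[μ] q) := by
  have h1α : (0:ℝ) < 1 + α := by linarith
  set a : ℝ := α^2*(5+α)/(1+α)^3 with ha_def
  set b : ℝ := α^2*(α-3)/(1+α)^3 with hb_def
  have hab : a + b = 2 * α ^ 2 / (1 + α) ^ 2 := by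
    rw [ha_def, hb_def]
    field_simp
    ring
  set f : X → ℝ := fun x => ((q x + p x) * α ^ 2 * (p x) ^ 2) / (q x + α * p x) ^ 2 with hf_def
  set g : X → ℝ := fun x => a * p x + b * q x with hg_def
  -- integrability of p and q
  have hpInt : Integrable p μ := by
    by_contra h
    rw [integral_undef h] at hp_int; norm_num at hp_int
  have hqInt : Integrable q μ := by
    by_contra h
    rw [integral_undef h] at hq_int; norm_num at hq_int
  -- f measurable
  have hf_meas : Measurable f := by
    apply Measurable.div
    · exact ((hq_meas.add hp_meas).mul measurable_const).mul (hp_meas.pow measurable_const)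
    · exact (hq_meas.add (measurable_const.mul hp_meas)).pow measurable_const
  -- bounds on f
  have hf_nonneg : ∀ x, 0 ≤ f x := fun x => by
    apply div_nonneg _ (sq_nonneg _)
    have := hp_nonneg x; have := hq_nonneg x
    positivity
  have hf_le : ∀ x, f x ≤ p x + q x := fun x => by
    have hpx := hp_nonneg x; have hqx := hq_nonneg x
    rcases eq_or_lt_of_le hpx with h | h
    · simp [hf_def, ← h]
      linarith
    · have hD : (0:ℝ) < (q x + α * p x)^2 := by positivity
      rw [hf_def]
      rw [div_le_iff₀ hD]
      nlinarith [mul_nonneg (add_nonneg hpx hqx)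
        (by positivity : (0:ℝ) ≤ q x ^ 2 + 2*α*(p x)*(q x))]
  have hfInt : Integrable f μ := by
    apply Integrable.mono' (hpInt.add hqInt) hf_meas.aestronglyMeasurable
    filter_upwards with x
    rw [Real.norm_eq_abs, abs_of_nonneg (hf_nonneg x)]
    exact hf_le x
  have hgInt : Integrable g μ := (hpInt.const_mul a).add (hqInt.const_mul b)
  have hg_integral : ∫ x, g x ∂μ = a + b := by
    rw [hg_def]
    rw [integral_add (hpInt.const_mul a) (hqInt.const_mul b),
      integral_const_mul, integral_const_mul, hp_int, hq_int]
    ring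
  -- pointwise key
  have hkey := fun x => lsgan_ptwise α hα0 hα1 (p x) (q x) (hp_nonneg x) (hq_nonneg x)
  have hgf : ∀ x, g x ≤ f x := fun x => (hkey x).1
  have hineq : 2 * α ^ 2 / (1 + α) ^ 2 ≤ ∫ x, f x ∂μ := by
    rw [← hab, ← hg_integral]
    exact integral_mono hgInt hfInt hgf
  refine ⟨hineq, ?_, ?_⟩
  · -- equality implies a.e. equal
    intro heq
    have hd : ∫ x, (f x - g x) ∂μ = 0 := by
      rw [integral_sub hfInt hgInt, heq, hg_integral, hab, sub_self]
    have hdz : (fun x => f x - g x) =ᵐ[μ] 0 := by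
      rw [← integral_eq_zero_iff_of_nonneg (fun x => sub_nonneg.mpr (hgf x)) (hfInt.sub hgInt)]
      exact hd
    filter_upwards [hdz] with x hx
    have : f x = g x := by
      simp only [Pi.zero_apply] at hx
      linarith
    exact (hkey x).2 this
  · -- a.e. equal implies equality
    intro hpq
    have : ∫ x, f x ∂μ = ∫ x, (2 * α ^ 2 / (1 + α) ^ 2) * q x ∂μ := by
      apply integral_congr_ae
      filter_upwards [hpq] with x hx
      rw [hf_def]
      simp only
      rw [hx]
      rcases eq_or_lt_of_le (hq_nonneg x) with h | h
      · simp [← h]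
      · have hne : (q x + α * q x) ≠ 0 := by positivity
        field_simp
        ring
    rw [this, integral_const_mul, hq_int, mul_one]
end

section
/- Let α be a real number with 0 < α ≤ 1 and define f : ℝ → ℝ by f(x) = ((x+1)·α²·x²)/(1+αx)² − 2α²/(1+α)². Then f(1) = 0 and f is convex on the interval [0, ∞). -/
/-- Appendix A: the function `f(x) = ((x+1)α²x²)/(1+αx)² − 2α²/(1+α)²` satisfies `f(1) = 0`
and is convex on `[0, ∞)` for `0 < α ≤ 1`. -/
theorem f_one_eq_zero_and_convex
    (α : ℝ) (hα0 : 0 < α) (hα1 : α ≤ 1)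
    (f : ℝ → ℝ)
    (hf : ∀ x, f x = ((x + 1) * α ^ 2 * x ^ 2) / (1 + α * x) ^ 2
        - 2 * α ^ 2 / (1 + α) ^ 2) :
    f 1 = 0 ∧ ConvexOn ℝ (Set.Ici (0 : ℝ)) f := by
  have hu : ∀ x : ℝ, 0 ≤ x → (0:ℝ) < 1 + α * x := fun x hx => by positivity
  constructor
  · rw [hf 1]; ring_nf
  · set f' : ℝ → ℝ := fun x => α ^ 2 * (α * x ^ 3 + 3 * x ^ 2 + 2 * x) / (1 + α * x) ^ 3
      with hf'def
    set f'' : ℝ → ℝ := fun x => α ^ 2 * ((6 - 4 * α) * x + 2) / (1 + α * x) ^ 4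
      with hf''def
    have hd1 : ∀ x : ℝ, 0 < 1 + α * x → HasDerivAt f (f' x) x := by
      intro x hx
      have hne : (1 + α * x) ≠ 0 := ne_of_gt hx
      have hN : HasDerivAt (fun y : ℝ => (y + 1) * α ^ 2 * y ^ 2)
          (α ^ 2 * (3 * x ^ 2 + 2 * x)) x := by
        have h : (fun y : ℝ => (y + 1) * α ^ 2 * y ^ 2)
            = fun y : ℝ => α ^ 2 * y ^ 3 + α ^ 2 * y ^ 2 := by funext y; ring
        rw [h]
        have h2 := ((hasDerivAt_pow 3 x).const_mul (α ^ 2)).add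
          ((hasDerivAt_pow 2 x).const_mul (α ^ 2))
        refine h2.congr_deriv ?_
        push_cast; ring
      have h1 : HasDerivAt (fun y : ℝ => 1 + α * y) α x := by
        simpa using ((hasDerivAt_id x).const_mul α).const_add 1
      have hD : HasDerivAt (fun y : ℝ => (1 + α * y) ^ 2)
          (2 * (1 + α * x) ^ 1 * α) x := h1.pow 2
      have hdiv := hN.div hD (by positivity)
      have heq : f = fun y => (y + 1) * α ^ 2 * y ^ 2 / (1 + α * y) ^ 2
          - 2 * α ^ 2 / (1 + α) ^ 2 := funext hf
      rw [heq]
      refine (hdiv.sub_const (2 * α ^ 2 / (1 + α) ^ 2)).congr_deriv ?_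
      rw [hf'def]
      field_simp
      ring
    have hd2 : ∀ x : ℝ, 0 < 1 + α * x → HasDerivAt f' (f'' x) x := by
      intro x hx
      have hne : (1 + α * x) ≠ 0 := ne_of_gt hx
      have hN : HasDerivAt (fun y : ℝ => α ^ 2 * (α * y ^ 3 + 3 * y ^ 2 + 2 * y))
          (α ^ 2 * (3 * α * x ^ 2 + 6 * x + 2)) x := by
        have h : (fun y : ℝ => α ^ 2 * (α * y ^ 3 + 3 * y ^ 2 + 2 * y))
            = fun y : ℝ => (α ^ 2 * α) * y ^ 3 + (3 * α ^ 2) * y ^ 2 + (2 * α ^ 2) * y := by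
          funext y; ring
        rw [h]
        have h2 := (((hasDerivAt_pow 3 x).const_mul (α ^ 2 * α)).add
          ((hasDerivAt_pow 2 x).const_mul (3 * α ^ 2))).add
          ((hasDerivAt_id x).const_mul (2 * α ^ 2))
        refine h2.congr_deriv ?_
        push_cast; ring
      have h1 : HasDerivAt (fun y : ℝ => 1 + α * y) α x := by
        simpa using ((hasDerivAt_id x).const_mul α).const_add 1
      have hD : HasDerivAt (fun y : ℝ => (1 + α * y) ^ 3)
          (3 * (1 + α * x) ^ 2 * α) x := h1.pow 3
      have hdiv := hN.div hD (by positivity)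
      refine hdiv.congr_deriv ?_
      rw [hf''def]
      field_simp
      ring
    have hcont : ContinuousOn f (Set.Ici (0:ℝ)) := fun x hx =>
      (hd1 x (hu x hx)).continuousAt.continuousWithinAt
    have hint : interior (Set.Ici (0:ℝ)) = Set.Ioi 0 := interior_Ici
    refine convexOn_of_hasDerivWithinAt2_nonneg (convex_Ici 0) hcont
      (f' := f') (f'' := f'') ?_ ?_ ?_
    · intro x hx
      rw [hint] at hx
      exact (hd1 x (hu x (le_of_lt hx))).hasDerivWithinAt
    · intro x hx
      rw [hint] at hx
      exact (hd2 x (hu x (le_of_lt hx))).hasDerivWithinAt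
    · intro x hx
      rw [hint] at hx
      have hx0 : (0:ℝ) ≤ x := le_of_lt hx
      rw [hf''def]
      have h1 : (0:ℝ) ≤ (6 - 4 * α) * x + 2 := by nlinarith
      have h2 : (0:ℝ) < (1 + α * x) ^ 4 := by positivity
      positivity
end

section
/- Let α be a real number with 0 < α ≤ 1 and define f : ℝ → ℝ by f(x) = ((x+1)·α²·x²)/(1+αx)² − 2α²/(1+α)². Then for every x > −1/α, the second derivative of f at x equals 2α²·(1 + (3−2α)·x) / (1+αx)⁴; in particular f''(x) ≥ 0 for all x ≥ 0. -/
private lemma hd_aux1 (α x : ℝ) (h : (1 + α * x) ≠ 0) :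
    HasDerivAt (fun y : ℝ => ((y + 1) * α ^ 2 * y ^ 2) / (1 + α * y) ^ 2 - 2 * α ^ 2 / (1 + α) ^ 2)
      (α ^ 2 * (α * x ^ 3 + 3 * x ^ 2 + 2 * x) / (1 + α * x) ^ 3) x := by
  have hp := (((hasDerivAt_id x).add_const 1).mul_const (α ^ 2)).mul ((hasDerivAt_id x).pow 2)
  have hq := (((hasDerivAt_id x).const_mul α).const_add 1).pow 2
  have := (hp.div hq (by simpa using pow_ne_zero 2 h)).sub_const (2 * α ^ 2 / (1 + α) ^ 2)
  refine this.congr_deriv ?_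
  simp only [id_eq, Pi.pow_apply, Pi.mul_apply, Nat.cast_ofNat, pow_one, mul_one]
  field_simp
  ring

private lemma hd_aux2 (α x : ℝ) (h : (1 + α * x) ≠ 0) :
    HasDerivAt (fun y : ℝ => α ^ 2 * (α * y ^ 3 + 3 * y ^ 2 + 2 * y) / (1 + α * y) ^ 3)
      (2 * α ^ 2 * (1 + (3 - 2 * α) * x) / (1 + α * x) ^ 4) x := by
  have hp := ((((hasDerivAt_id x).pow 3).const_mul α).add
      ((((hasDerivAt_id x).pow 2).const_mul 3).add ((hasDerivAt_id x).const_mul 2))).const_mul (α ^ 2)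
  have hq := (((hasDerivAt_id x).const_mul α).const_add 1).pow 3
  have := hp.div hq (by simpa using pow_ne_zero 3 h)
  have goal : HasDerivAt (fun y : ℝ => α ^ 2 * (α * y ^ 3 + (3 * y ^ 2 + 2 * y)) / (1 + α * y) ^ 3)
      (2 * α ^ 2 * (1 + (3 - 2 * α) * x) / (1 + α * x) ^ 4) x := by
    refine this.congr_deriv ?_
    simp only [id_eq, Pi.pow_apply, Pi.mul_apply, Pi.add_apply, Nat.cast_ofNat, pow_one, mul_one]
    field_simp
    ring
  convert goal using 2 with y
  ring

/-- Appendix A: for `0 < α ≤ 1` and `f(x) = ((x+1)α²x²)/(1+αx)² − 2α²/(1+α)²`, the second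
derivative of `f` at any `x > −1/α` equals `2α²(1+(3−2α)x)/(1+αx)⁴`; in particular it is
nonnegative for `x ≥ 0`. -/
theorem f_second_derivative
    (α : ℝ) (hα0 : 0 < α) (hα1 : α ≤ 1)
    (f : ℝ → ℝ)
    (hf : ∀ x, f x = ((x + 1) * α ^ 2 * x ^ 2) / (1 + α * x) ^ 2
        - 2 * α ^ 2 / (1 + α) ^ 2) :
    (∀ x : ℝ, -1 / α < x →
        iteratedDeriv 2 f x = 2 * α ^ 2 * (1 + (3 - 2 * α) * x) / (1 + α * x) ^ 4) ∧
    (∀ x : ℝ, 0 ≤ x → 0 ≤ iteratedDeriv 2 f x) := by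
  have key : ∀ x : ℝ, -1 / α < x →
      iteratedDeriv 2 f x = 2 * α ^ 2 * (1 + (3 - 2 * α) * x) / (1 + α * x) ^ 4 := by
    intro x hx
    have hopen : IsOpen {y : ℝ | 0 < 1 + α * y} :=
      isOpen_lt continuous_const (by continuity)
    have hxmem : x ∈ {y : ℝ | 0 < 1 + α * y} := by
      have h1 : -1 < x * α := by rwa [div_lt_iff₀ hα0] at hx
      have := mul_comm α x
      simp only [Set.mem_setOf_eq]
      linarith
    have hnhds : {y : ℝ | 0 < 1 + α * y} ∈ nhds x := hopen.mem_nhds hxmem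
    have hev : deriv f =ᶠ[nhds x]
        fun y => α ^ 2 * (α * y ^ 3 + 3 * y ^ 2 + 2 * y) / (1 + α * y) ^ 3 := by
      filter_upwards [hnhds] with y hy
      have hy' : (1 + α * y) ≠ 0 := ne_of_gt hy
      have hfe : f = fun z : ℝ => ((z + 1) * α ^ 2 * z ^ 2) / (1 + α * z) ^ 2
          - 2 * α ^ 2 / (1 + α) ^ 2 := funext hf
      rw [hfe]
      exact (hd_aux1 α y hy').deriv
    rw [iteratedDeriv_succ, iteratedDeriv_one, hev.deriv_eq]
    exact (hd_aux2 α x (ne_of_gt hxmem)).deriv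
  refine ⟨key, fun x hx => ?_⟩
  have hlt : -1 / α < x :=
    lt_of_lt_of_le (div_neg_of_neg_of_pos (by norm_num) hα0) hx
  rw [key x hlt]
  have h1 : (0:ℝ) ≤ 1 + (3 - 2 * α) * x := by nlinarith
  have h2 : (0:ℝ) < 1 + α * x := by nlinarith
  apply div_nonneg (by positivity) (by positivity)
end

section
/- Let (X, μ) be a measure space, let α be a real number with 0 < α ≤ 1, let f : ℝ → ℝ be defined by f(x) = ((x+1)·α²·x²)/(1+αx)² − 2α²/(1+α)², and let p and q be probability densities on (X, μ) with q(x) > 0 for μ-almost every x. Then the f-divergence D_f(p‖q) = ∫ q(x) · f( p(x)/q(x) ) dμ(x) satisfies D_f(p‖q) ≥ 0, and D_f(p‖q) = 0 if and only if p = q μ-almost everywhere. -/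
open MeasureTheory

lemma key_pos (α x : ℝ) (hα0 : 0 < α) (hα1 : α ≤ 1) (hx : 0 ≤ x) :
    (0:ℝ) < (3 - α) + (1 + 3 * α - 2 * α ^ 2) * x := by
  have h32 : (0:ℝ) ≤ 3 - 2 * α := by linarith
  have hcoef : (0:ℝ) ≤ 1 + 3 * α - 2 * α ^ 2 := by nlinarith [mul_nonneg hα0.le h32]
  have := mul_nonneg hcoef hx
  linarith

lemma key_id (α x : ℝ) (hα0 : 0 < α) (hx : 0 ≤ x) :
    ((x + 1) * α ^ 2 * x ^ 2) / (1 + α * x) ^ 2 - 2 * α ^ 2 / (1 + α) ^ 2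
      - α ^ 2 * (5 + α) / (1 + α) ^ 3 * (x - 1)
    = α ^ 2 * (x - 1) ^ 2 * ((3 - α) + (1 + 3 * α - 2 * α ^ 2) * x)
        / ((1 + α * x) ^ 2 * (1 + α) ^ 3) := by
  have h1 : (1 : ℝ) + α * x ≠ 0 := by positivity
  have h2 : (1 : ℝ) + α ≠ 0 := by positivity
  field_simp
  ring

lemma key_nonneg (α x : ℝ) (hα0 : 0 < α) (hα1 : α ≤ 1) (hx : 0 ≤ x) :
    0 ≤ ((x + 1) * α ^ 2 * x ^ 2) / (1 + α * x) ^ 2 - 2 * α ^ 2 / (1 + α) ^ 2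
      - α ^ 2 * (5 + α) / (1 + α) ^ 3 * (x - 1) := by
  rw [key_id α x hα0 hx]
  have h3 := key_pos α x hα0 hα1 hx
  positivity

lemma key_eq_zero (α x : ℝ) (hα0 : 0 < α) (hα1 : α ≤ 1) (hx : 0 ≤ x)
    (h : ((x + 1) * α ^ 2 * x ^ 2) / (1 + α * x) ^ 2 - 2 * α ^ 2 / (1 + α) ^ 2
      - α ^ 2 * (5 + α) / (1 + α) ^ 3 * (x - 1) = 0) : x = 1 := by
  rw [key_id α x hα0 hx] at h
  have h3 := key_pos α x hα0 hα1 hx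
  have h1 : (0:ℝ) < (1 + α * x) ^ 2 * (1 + α) ^ 3 := by positivity
  rw [div_eq_zero_iff] at h
  rcases h with h | h
  · have hα2 : (0:ℝ) < α ^ 2 := by positivity
    have hsq : (x - 1) ^ 2 = 0 := by
      by_contra hne
      have hsq' : 0 < (x - 1) ^ 2 := lt_of_le_of_ne (sq_nonneg _) (Ne.symm hne)
      nlinarith [mul_pos (mul_pos hα2 hsq') h3]
    have := pow_eq_zero_iff (n := 2) (by norm_num) |>.mp hsq
    linarith [sub_eq_zero.mp this]
  · linarith

/-- The specific f-divergence `D_f(p‖q) = ∫ q(x) f(p(x)/q(x)) dμ(x)` built from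
`f(x) = ((x+1)α²x²)/(1+αx)² − 2α²/(1+α)²` is non-negative and vanishes exactly
when the two probability densities coincide μ-a.e. -/
theorem f_divergence_nonneg_eq_zero_iff
    {X : Type*} [MeasurableSpace X] (μ : Measure X)
    (α : ℝ) (hα0 : 0 < α) (hα1 : α ≤ 1)
    (f : ℝ → ℝ)
    (hf : ∀ x, f x = ((x + 1) * α ^ 2 * x ^ 2) / (1 + α * x) ^ 2
        - 2 * α ^ 2 / (1 + α) ^ 2)
    (p q : X → ℝ)
    (hp_meas : Measurable p) (hp_nonneg : ∀ x, 0 ≤ p x) (hp_int : ∫ x, p x ∂μ = 1)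
    (hq_meas : Measurable q) (hq_nonneg : ∀ x, 0 ≤ q x) (hq_int : ∫ x, q x ∂μ = 1)
    (hq_pos : ∀ᵐ x ∂μ, 0 < q x) :
    (0 ≤ ∫ x, q x * f (p x / q x) ∂μ) ∧
    ((∫ x, q x * f (p x / q x) ∂μ) = 0 ↔ p =ᵐ[μ] q) := by
  have hc0 : (0:ℝ) ≤ 2 * α ^ 2 / (1 + α) ^ 2 := by positivity
  set c : ℝ := 2 * α ^ 2 / (1 + α) ^ 2 with hc
  set m : ℝ := α ^ 2 * (5 + α) / (1 + α) ^ 3 with hm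
  -- integrability of p and q
  have hpI : Integrable p μ := by
    by_contra h
    rw [integral_undef h] at hp_int; exact one_ne_zero hp_int.symm
  have hqI : Integrable q μ := by
    by_contra h
    rw [integral_undef h] at hq_int; exact one_ne_zero hq_int.symm
  set F : X → ℝ := fun x => q x * f (p x / q x) with hF
  -- measurability of F
  have hFmeas : Measurable F := by
    have hFeq : F = fun x => q x * (((p x / q x + 1) * α ^ 2 * (p x / q x) ^ 2)
        / (1 + α * (p x / q x)) ^ 2 - c) := by
      funext x; simp only [hF, hf]
    rw [hFeq]
    have ht : Measurable fun x => p x / q x := hp_meas.div hq_meas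
    exact hq_meas.mul
      (((((ht.add_const 1).mul_const (α ^ 2)).mul (ht.pow_const 2)).div
        (((ht.const_mul α).const_add 1).pow_const 2)).sub_const c)
  -- pointwise bound |F x| ≤ p x + q x + c * q x
  have hFbound : ∀ x, |F x| ≤ p x + q x + c * q x := by
    intro x
    rcases eq_or_lt_of_le (hq_nonneg x) with hq0 | hq0
    · have hqx : q x = 0 := hq0.symm
      simp only [hF, hqx, zero_mul, abs_zero, mul_zero, add_zero]
      linarith [hp_nonneg x]
    · set t := p x / q x with ht
      have ht0 : 0 ≤ t := div_nonneg (hp_nonneg x) (hq_nonneg x)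
      have hg0 : 0 ≤ (t + 1) * α ^ 2 * t ^ 2 / (1 + α * t) ^ 2 := by positivity
      have hg1 : (t + 1) * α ^ 2 * t ^ 2 / (1 + α * t) ^ 2 ≤ t + 1 := by
        rw [div_le_iff₀ (by positivity)]
        nlinarith [mul_nonneg ht0 (sq_nonneg α)]
      have hFx : F x = q x * ((t + 1) * α ^ 2 * t ^ 2 / (1 + α * t) ^ 2 - c) := by
        simp only [hF, hf]; rfl
      have hqt : q x * (t + 1) = p x + q x := by
        rw [ht]; field_simp
      rw [abs_le, hFx]
      constructor
      · nlinarith [mul_nonneg hq0.le hg0, hq_nonneg x, hp_nonneg x]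
      · nlinarith [mul_le_mul_of_nonneg_left hg1 (hq_nonneg x)]
  have hFI : Integrable F μ :=
    Integrable.mono ((hpI.add hqI).add (hqI.const_mul c))
      hFmeas.aestronglyMeasurable
      (Filter.Eventually.of_forall fun x => by
        rw [Real.norm_eq_abs, Real.norm_eq_abs]
        exact (hFbound x).trans (le_abs_self _))
  set G : X → ℝ := fun x => F x - m * (p x - q x) with hG
  have hmpqI : Integrable (fun x => m * (p x - q x)) μ := by
    exact (hpI.sub hqI).const_mul m
  have hGI : Integrable G μ := hFI.sub hmpqI
  have hInt : ∫ x, G x ∂μ = ∫ x, F x ∂μ := by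
    simp only [hG]
    rw [integral_sub hFI hmpqI, integral_const_mul,
      integral_sub hpI hqI, hp_int, hq_int]
    ring
  -- a.e. nonnegativity of G, with characterization
  have hGae : ∀ᵐ x ∂μ, 0 ≤ G x ∧ (G x = 0 → p x = q x) := by
    filter_upwards [hq_pos] with x hqx
    obtain ⟨t, ht⟩ : ∃ t, p x / q x = t := ⟨_, rfl⟩
    have ht0 : 0 ≤ t := ht ▸ div_nonneg (hp_nonneg x) hqx.le
    have hpt : p x = q x * t := by rw [← ht]; field_simp
    have hGx : G x = q x * (((t + 1) * α ^ 2 * t ^ 2) / (1 + α * t) ^ 2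
        - c - m * (t - 1)) := by
      simp only [hG, hF, hf]
      rw [ht, hpt]; ring
    constructor
    · rw [hGx]
      exact mul_nonneg hqx.le (key_nonneg α t hα0 hα1 ht0)
    · intro h0
      rw [hGx, mul_eq_zero] at h0
      rcases h0 with h0 | h0
      · exact absurd h0 hqx.ne'
      · have := key_eq_zero α t hα0 hα1 ht0 h0
        rw [hpt, this, mul_one]
  have hGnn : ∀ᵐ x ∂μ, 0 ≤ G x := hGae.mono fun x h => h.1
  have hmain : 0 ≤ ∫ x, F x ∂μ := by
    rw [← hInt]; exact integral_nonneg_of_ae hGnn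
  refine ⟨hmain, ?_, ?_⟩
  · intro h0
    have hGz : ∫ x, G x ∂μ = 0 := by rw [hInt]; exact h0
    have hG0 : G =ᵐ[μ] 0 := (integral_eq_zero_iff_of_nonneg_ae hGnn hGI).mp hGz
    filter_upwards [hGae, hG0] with x hx hx0
    exact hx.2 hx0
  · intro hpq
    have hF0 : F =ᵐ[μ] 0 := by
      filter_upwards [hq_pos, hpq] with x hqx hpx
      simp only [hF, Pi.zero_apply]
      rw [hpx, div_self hqx.ne', hf]
      norm_num
      exact Or.inr (sub_eq_zero.mpr hc.symm)
    calc ∫ x, F x ∂μ = ∫ x, (0:ℝ) ∂μ := integral_congr_ae hF0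
      _ = 0 := integral_zero _ _
end

section
/- Let α > 0 be a real number and define g : (0, ∞) → ℝ by g(x) = −(1+x)·log(1+αx) + x·log(x) + 2·log(1+α). Then g(1) = 0 and g is convex on (0, ∞). -/
open Real

/-- Appendix B: for `α > 0`, the function `g(x) = −(1+x)·log(1+αx) + x·log x + 2·log(1+α)`
satisfies `g(1) = 0` and is convex on `(0, ∞)`. -/
theorem g_one_eq_zero_and_convex
    (α : ℝ) (hα : 0 < α)
    (g : ℝ → ℝ)
    (hg : ∀ x, g x = -(1 + x) * Real.log (1 + α * x) + x * Real.log x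
        + 2 * Real.log (1 + α)) :
    g 1 = 0 ∧ ConvexOn ℝ (Set.Ioi (0 : ℝ)) g := by
  constructor
  · rw [hg 1]
    simp [Real.log_one]
    ring
  · set g' : ℝ → ℝ := fun x =>
      (-1) * Real.log (1 + α * x) + (-(1 + x)) * (α / (1 + α * x)) + (Real.log x + 1) with hg'def
    set g'' : ℝ → ℝ := fun x =>
      -(α / (1 + α * x)) + ((-1) * (α / (1 + α * x)) + (-(1 + x)) * (-(α * α) / (1 + α * x) ^ 2))
        + 1 / x with hg''def
    have key : ∀ x ∈ Set.Ioi (0 : ℝ), 0 < 1 + α * x := fun x hx => by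
      have : (0:ℝ) < x := hx
      nlinarith
    have hder : ∀ x ∈ Set.Ioi (0 : ℝ), HasDerivAt g (g' x) x := by
      intro x hx
      have hx0 : (0:ℝ) < x := hx
      have h1x : 0 < 1 + α * x := key x hx
      have hlin : HasDerivAt (fun y : ℝ => 1 + α * y) α x := by
        simpa using ((hasDerivAt_id x).const_mul α).const_add 1
      have hlog : HasDerivAt (fun y : ℝ => Real.log (1 + α * y)) (α / (1 + α * x)) x := by
        simpa [div_eq_inv_mul, Function.comp_def] using (Real.hasDerivAt_log h1x.ne').comp x hlin
      have hA : HasDerivAt (fun y : ℝ => -(1 + y) * Real.log (1 + α * y))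
          ((-1) * Real.log (1 + α * x) + (-(1 + x)) * (α / (1 + α * x))) x := by
        have hc : HasDerivAt (fun y : ℝ => -(1 + y)) (-1) x := by
          exact (((hasDerivAt_id x).const_add 1).neg).congr_of_eventuallyEq (Filter.Eventually.of_forall fun y => rfl)
        exact hc.mul hlog
      have hB : HasDerivAt (fun y : ℝ => y * Real.log y) (Real.log x + 1) x :=
        Real.hasDerivAt_mul_log hx0.ne'
      have := (hA.add hB).add_const (2 * Real.log (1 + α))
      have heq : g = fun y => -(1 + y) * Real.log (1 + α * y) + y * Real.log y
          + 2 * Real.log (1 + α) := funext hg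
      rw [heq]
      exact this
    have hder2 : ∀ x ∈ Set.Ioi (0 : ℝ), HasDerivAt g' (g'' x) x := by
      intro x hx
      have hx0 : (0:ℝ) < x := hx
      have h1x : 0 < 1 + α * x := key x hx
      have hlin : HasDerivAt (fun y : ℝ => 1 + α * y) α x := by
        simpa using ((hasDerivAt_id x).const_mul α).const_add 1
      have hlog : HasDerivAt (fun y : ℝ => Real.log (1 + α * y)) (α / (1 + α * x)) x := by
        simpa [div_eq_inv_mul, Function.comp_def] using (Real.hasDerivAt_log h1x.ne').comp x hlin
      have hinv : HasDerivAt (fun y : ℝ => α / (1 + α * y)) (-(α * α) / (1 + α * x) ^ 2) x := by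
        have h2 : HasDerivAt (fun y : ℝ => α / (1 + α * y)) ((0 * (1 + α * x) - α * α) / (1 + α * x) ^ 2) x :=
          (hasDerivAt_const x α).div hlin h1x.ne'
        convert h2 using 1
        ring
      have hc : HasDerivAt (fun y : ℝ => -(1 + y)) (-1) x := by
        exact (((hasDerivAt_id x).const_add 1).neg).congr_of_eventuallyEq (Filter.Eventually.of_forall fun y => rfl)
      have hA : HasDerivAt (fun y : ℝ => (-(1 + y)) * (α / (1 + α * y)))
          ((-1) * (α / (1 + α * x)) + (-(1 + x)) * (-(α * α) / (1 + α * x) ^ 2)) x :=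
        hc.mul hinv
      have hL : HasDerivAt (fun y : ℝ => (-1 : ℝ) * Real.log (1 + α * y))
          (-(α / (1 + α * x))) x := by
        simpa using hlog.const_mul (-1 : ℝ)
      have hlogx : HasDerivAt (fun y : ℝ => Real.log y + 1) (1 / x) x := by
        simpa [one_div] using (Real.hasDerivAt_log hx0.ne').add_const 1
      exact (hL.add hA).add hlogx
    have hnn : ∀ x ∈ Set.Ioi (0 : ℝ), 0 ≤ g'' x := by
      intro x hx
      have hx0 : (0:ℝ) < x := hx
      have h1x : 0 < 1 + α * x := key x hx
      have : g'' x = (1 + α ^ 2 * x) / (x * (1 + α * x) ^ 2) := by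
        rw [hg''def]
        field_simp
        ring
      rw [this]
      positivity
    have hcont : ContinuousOn g (Set.Ioi (0 : ℝ)) :=
      fun x hx => ((hder x hx).continuousAt.continuousWithinAt)
    have hint : interior (Set.Ioi (0 : ℝ)) = Set.Ioi (0 : ℝ) := interior_Ioi
    exact convexOn_of_hasDerivWithinAt2_nonneg (convex_Ioi 0) hcont
      (fun x hx => ((hder x (hint ▸ hx)).hasDerivWithinAt))
      (fun x hx => ((hder2 x (hint ▸ hx)).hasDerivWithinAt))
      (fun x hx => hnn x (hint ▸ hx))
end

section
/- Let (X, μ) be a measure space, let α be a real number with 0 < α ≤ 1, and let p and q be probability densities on (X, μ) with p(x) > 0 and q(x) > 0 for μ-almost every x. Then ∫ [ q(x)·log( q(x) / (q(x) + α·p(x)) ) + p(x)·log( α·p(x) / (q(x) + α·p(x)) ) ] dμ(x) ≥ log(α) − 2·log(1+α), and equality holds if and only if p = q μ-almost everywhere. -/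
open MeasureTheory Real

lemma gibbs_pt (a d : ℝ) (ha : 0 < a) (hd : 0 < d) :
    a - d ≤ a * Real.log (a / d) ∧ (a * Real.log (a / d) = a - d ↔ a = d) := by
  have hx : 0 < d / a := div_pos hd ha
  have h1 : Real.log (d / a) ≤ d / a - 1 := Real.log_le_sub_one_of_pos hx
  have hlog : Real.log (a / d) = - Real.log (d / a) := by
    rw [← Real.log_inv]
    congr 1
    field_simp
  have had : a * (d / a) = d := by field_simp
  constructor
  · have h2 := mul_le_mul_of_nonneg_left h1 ha.le
    rw [hlog]
    nlinarith
  · constructor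
    · intro h
      by_contra hne
      have hne1 : d / a ≠ 1 := by
        intro h1'
        apply hne
        field_simp at h1'
        linarith
      have h2 : Real.log (d / a) < d / a - 1 := Real.log_lt_sub_one_of_pos hx hne1
      have h3 := mul_lt_mul_of_pos_left h2 ha
      rw [hlog] at h
      nlinarith
    · intro h
      subst h
      simp [div_self hd.ne']

lemma pointwise_key (α a b : ℝ) (hα : 0 < α) (ha : 0 < a) (hb : 0 < b) :
    (a * Real.log (1 / (1 + α)) + b * Real.log (α / (1 + α)) + a + b
        - 2 * (a + α * b) / (1 + α))
      ≤ a * Real.log (a / (a + α * b)) + b * Real.log (α * b / (a + α * b)) ∧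
    (a * Real.log (a / (a + α * b)) + b * Real.log (α * b / (a + α * b))
      = a * Real.log (1 / (1 + α)) + b * Real.log (α / (1 + α)) + a + b
        - 2 * (a + α * b) / (1 + α) ↔ a = b) := by
  have hc : (0:ℝ) < 1 + α := by linarith
  have hs : 0 < a + α * b := by positivity
  set d : ℝ := (a + α * b) / (1 + α) with hd_def
  have hd : 0 < d := by positivity
  have h1 := gibbs_pt a d ha hd
  have h2 := gibbs_pt b d hb hd
  have e1 : Real.log (a / (a + α * b)) = Real.log (a / d) + Real.log (1 / (1 + α)) := by
    rw [← Real.log_mul (by positivity) (by positivity)]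
    congr 1
    rw [hd_def]
    field_simp
  have e2 : Real.log (α * b / (a + α * b)) = Real.log (b / d) + Real.log (α / (1 + α)) := by
    rw [← Real.log_mul (by positivity) (by positivity)]
    congr 1
    rw [hd_def]
    field_simp
  have e3 : 2 * (a + α * b) / (1 + α) = d + d := by rw [hd_def]; ring
  have key1 : a = d ↔ a = b := by
    rw [hd_def, eq_div_iff hc.ne']
    constructor
    · intro h
      have : α * a = α * b := by linarith [h]
      exact mul_left_cancel₀ hα.ne' this
    · intro h; rw [h]; ring
  have key2 : a = b → b = d := by
    intro h
    rw [hd_def, h]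
    field_simp
  constructor
  · rw [e1, e2]
    nlinarith [h1.1, h2.1]
  · constructor
    · intro h
      rw [e1, e2] at h
      have t1 : a - d ≤ a * Real.log (a / d) := h1.1
      have t2 : b - d ≤ b * Real.log (b / d) := h2.1
      have : a * Real.log (a / d) = a - d := by nlinarith
      exact key1.mp (h1.2.mp this)
    · intro h
      have ha' : a = d := key1.mpr h
      have hb' : b = d := key2 h
      rw [e1, e2, e3]
      linear_combination h1.2.mpr ha' + h2.2.mpr hb'

/-- Appendix B in analytic form: the standard (binary cross-entropy) GAN generator objective
given the optimal maximal discriminator is at least `log α − 2 log(1+α)`, with equality iff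
`p = q` μ-a.e. -/
theorem bce_gan_objective_min
    {X : Type*} [MeasurableSpace X] (μ : Measure X)
    (α : ℝ) (hα0 : 0 < α) (hα1 : α ≤ 1)
    (p q : X → ℝ)
    (hp_meas : Measurable p) (hp_nonneg : ∀ x, 0 ≤ p x) (hp_int : ∫ x, p x ∂μ = 1)
    (hq_meas : Measurable q) (hq_nonneg : ∀ x, 0 ≤ q x) (hq_int : ∫ x, q x ∂μ = 1)
    (hp_pos : ∀ᵐ x ∂μ, 0 < p x) (hq_pos : ∀ᵐ x ∂μ, 0 < q x) :
    (Real.log α - 2 * Real.log (1 + α) ≤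
      ∫ x, (q x * Real.log (q x / (q x + α * p x))
        + p x * Real.log (α * p x / (q x + α * p x))) ∂μ) ∧
    ((∫ x, (q x * Real.log (q x / (q x + α * p x))
        + p x * Real.log (α * p x / (q x + α * p x))) ∂μ)
        = Real.log α - 2 * Real.log (1 + α) ↔ p =ᵐ[μ] q) := by
  have hc : (0:ℝ) < 1 + α := by linarith
  have hc1 : (1:ℝ) < 1 + α := by linarith
  set f : X → ℝ := fun x => q x * Real.log (q x / (q x + α * p x))
      + p x * Real.log (α * p x / (q x + α * p x)) with hf_def
  have hp_i : Integrable p μ := integrable_of_integral_eq_one hp_int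
  have hq_i : Integrable q μ := integrable_of_integral_eq_one hq_int
  set A : ℝ := Real.log (1 / (1 + α)) + 1 - 2 / (1 + α) with hA_def
  set B : ℝ := Real.log (α / (1 + α)) + 1 - 2 * α / (1 + α) with hB_def
  set L : X → ℝ := fun x => A * q x + B * p x with hL_def
  have hL_i : Integrable L μ := (hq_i.const_mul A).add (hp_i.const_mul B)
  have hL_val : ∫ x, L x ∂μ = Real.log α - 2 * Real.log (1 + α) := by
    rw [hL_def]
    rw [integral_add (hq_i.const_mul A) (hp_i.const_mul B), integral_const_mul,
      integral_const_mul, hp_int, hq_int]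
    have h1 : Real.log (1 / (1 + α)) = - Real.log (1 + α) := by
      rw [one_div, Real.log_inv]
    have h2 : Real.log (α / (1 + α)) = Real.log α - Real.log (1 + α) :=
      Real.log_div hα0.ne' hc.ne'
    have h3 : 2 / (1 + α) + 2 * α / (1 + α) = 2 := by
      field_simp
    rw [hA_def, hB_def, h1, h2]
    linarith
  have h_ae : ∀ᵐ x ∂μ, L x ≤ f x ∧ (f x = L x ↔ p x = q x) := by
    filter_upwards [hp_pos, hq_pos] with x hpx hqx
    have hk := pointwise_key α (q x) (p x) hα0 hqx hpx
    have hLx : L x = q x * Real.log (1 / (1 + α)) + p x * Real.log (α / (1 + α))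
        + q x + p x - 2 * (q x + α * p x) / (1 + α) := by
      rw [hL_def, hA_def, hB_def]
      ring
    constructor
    · rw [hLx, hf_def]
      exact hk.1
    · rw [hLx, hf_def]
      rw [hk.2]
      exact eq_comm
  by_cases hf_i : Integrable f μ
  · have hg_i : Integrable (fun x => f x - L x) μ := hf_i.sub hL_i
    have hg_nn : 0 ≤ᵐ[μ] fun x => f x - L x := by
      filter_upwards [h_ae] with x hx
      exact sub_nonneg.2 hx.1
    have hint : ∫ x, f x ∂μ = ∫ x, L x ∂μ + ∫ x, (f x - L x) ∂μ := by
      rw [← integral_add hL_i hg_i]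
      simp
    have hg0 : 0 ≤ ∫ x, (f x - L x) ∂μ := integral_nonneg_of_ae hg_nn
    constructor
    · rw [hint, hL_val]
      linarith
    · rw [hint, hL_val]
      have hzero : (∫ x, (f x - L x) ∂μ) = 0 ↔ (fun x => f x - L x) =ᵐ[μ] 0 :=
        integral_eq_zero_iff_of_nonneg_ae hg_nn hg_i
      constructor
      · intro h
        have h0 : (∫ x, (f x - L x) ∂μ) = 0 := by linarith
        filter_upwards [h_ae, hzero.mp h0] with x hx hx0
        simp only [Pi.zero_apply] at hx0
        exact hx.2.mp (by linarith)
      · intro h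
        have : (fun x => f x - L x) =ᵐ[μ] 0 := by
          filter_upwards [h_ae, h] with x hx hpq
          simp [hx.2.mpr hpq]
        have := hzero.mpr this
        linarith
  · rw [integral_undef hf_i]
    have hla : Real.log α ≤ 0 := Real.log_nonpos hα0.le hα1
    have hlc : 0 < Real.log (1 + α) := Real.log_pos hc1
    constructor
    · linarith
    · constructor
      · intro h
        linarith
      · intro hpq
        exfalso
        apply hf_i
        have heq : (fun x => (Real.log (1 / (1 + α)) + Real.log (α / (1 + α))) * q x)
            =ᵐ[μ] f := by
          filter_upwards [hpq, hq_pos] with x hx hqx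
          rw [hf_def]
          simp only
          rw [hx]
          have h1 : q x / (q x + α * q x) = 1 / (1 + α) := by
            rw [show q x + α * q x = (1 + α) * q x by ring]
            rw [div_eq_div_iff (by positivity) hc.ne']
            ring
          have h2 : α * q x / (q x + α * q x) = α / (1 + α) := by
            rw [show q x + α * q x = (1 + α) * q x by ring]
            rw [div_eq_div_iff (by positivity) hc.ne']
            ring
          rw [h1, h2]
          ring
        exact (hq_i.const_mul _).congr heq
end
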